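/- arXiv:1501.03680 — 3 statements merged into one kernel-verified Lean document; each statement's English description precedes it below -/
import Mathlib

section
/- Let 0 < p < 2. There exists a constant L ≥ 1 depending only on p such that for all integers d ≥ 2 and all natural numbers k, e_k(S_p^{d−1}, ℓ_p^d) ≤ L · e_k(S_2^{d−1}, ℓ_2^d). (This follows by transporting coverings of the Euclidean sphere to the p-sphere via the Mazur map M_p(x) = (sign(x_j)|x_j|^{2/p})_{j=1}^d, which is Lipschitz with a constant independent of the dimension.) -/
/-!
For `α = q / p ≥ 1` the signed power `t ↦ sign t * |t| ^ α` satisfies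
`|M a - M b| ≤ α |a - b| (|a| + |b|) ^ (α - 1)`; raising this to the power `p` and applying Hölder
with the conjugate exponents `q / p`, `q / (q - p)` shows that the Mazur map `M_{q/p}`, which maps
`S_q` onto `S_p`, satisfies `‖M x - M y‖_p ≤ (q / p) 2 ^ ((q - p) / p) ‖x - y‖_q` on the unit ball
of `ℓ_q`. Recentre every ball of a cover of `S_q` at a point of `S_q` inside it (doubling the
radius) and push the centres through `M`: this covers `S_p` by as many balls, with radius
multiplied by a constant independent of `d`. The theorem is the case `q = 2`.
-/

open scoped Pointwise BigOperators

/-- The `ℓ_p` (quasi-)norm on `ℝ^d` for `0 < p < ∞`. -/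
noncomputable def pNorm (p : ℝ) {d : ℕ} (x : Fin d → ℝ) : ℝ :=
  (∑ i, |x i| ^ p) ^ (1 / p)

/-- The `ℓ_∞` norm on `ℝ^d`. -/
noncomputable def supNorm {d : ℕ} (x : Fin d → ℝ) : ℝ :=
  ⨆ i, |x i|

/-- The closed unit ball of `ℓ_p^d`. -/
def pBall (p : ℝ) (d : ℕ) : Set (Fin d → ℝ) := {x | pNorm p x ≤ 1}

/-- The unit sphere of `ℓ_p^d`. -/
def pSphere (p : ℝ) (d : ℕ) : Set (Fin d → ℝ) := {x | pNorm p x = 1}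

/-- The closed unit ball of `ℓ_∞^d`. -/
def supBall (d : ℕ) : Set (Fin d → ℝ) := {x | supNorm x ≤ 1}

/-- The `k`-th (dyadic) entropy number of `K` with respect to the "unit ball" `B`:
the infimum of all `ε > 0` such that `K` can be covered by `2^(k-1)` translates of `ε • B`. -/
noncomputable def entropyNumber {d : ℕ} (K B : Set (Fin d → ℝ)) (k : ℕ) : ℝ :=
  sInf {ε : ℝ | 0 < ε ∧ ∃ c : Fin (2 ^ (k - 1)) → (Fin d → ℝ),
    K ⊆ ⋃ j, (c j +ᵥ ε • B)}

lemma exists_nonneg_eq_or_eq_neg (t : ℝ) : ∃ s, 0 ≤ s ∧ (t = s ∨ t = -s) :=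
  ⟨|t|, abs_nonneg t, (abs_choice t).imp Eq.symm fun h => by rw [h, neg_neg]⟩

lemma Real.rpow_sub_rpow_le_mul_rpow_sub_one {α a b : ℝ} (hα : 1 ≤ α) (ha : 0 ≤ a)
    (hb : 0 ≤ b) :
    a ^ α - b ^ α ≤ α * (a - b) * a ^ (α - 1) := by
  have hα0 : 0 < α := zero_lt_one.trans_le hα
  have amgm := Real.geom_mean_le_arith_mean2_weighted (inv_nonneg.mpr hα0.le)
    (sub_nonneg.mpr (inv_le_one_of_one_le₀ hα)) (Real.rpow_nonneg hb α) (Real.rpow_nonneg ha α)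
    (add_sub_cancel _ _)
  rw [← Real.rpow_mul hb, ← Real.rpow_mul ha, mul_inv_cancel₀ hα0.ne', Real.rpow_one,
    mul_sub, mul_one, mul_inv_cancel₀ hα0.ne'] at amgm
  have hsplit : a ^ α = a * a ^ (α - 1) := by
    rw [← Real.rpow_one_add' ha (by linarith), add_sub_cancel]
  have key : α * (b * a ^ (α - 1)) ≤ b ^ α + (α - 1) * a ^ α := by
    calc _ ≤ α * (α⁻¹ * b ^ α + (1 - α⁻¹) * a ^ α) := mul_le_mul_of_nonneg_left amgm hα0.le
      _ = _ := by field_simp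
  linear_combination key + α * hsplit

lemma Real.sum_rpow_mul_rpow_sub_le {ι : Type*} (s : Finset ι) {p q : ℝ} (hp : 0 < p)
    (hpq : p < q) {u v : ι → ℝ} (hu : ∀ i, 0 ≤ u i) (hv : ∀ i, 0 ≤ v i) :
    ∑ i ∈ s, u i ^ p * v i ^ (q - p) ≤
      (∑ i ∈ s, u i ^ q) ^ (p / q) * (∑ i ∈ s, v i ^ q) ^ ((q - p) / q) := by
  have hq : 0 < q := hp.trans hpq
  have hconj : (p / q)⁻¹.HolderConjugate ((q - p) / q)⁻¹ :=
    .inv_inv (by positivity) (div_pos (sub_pos.mpr hpq) hq) (by field_simp; ring)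
  have holder := Real.inner_le_Lp_mul_Lq_of_nonneg s hconj
    (fun i _ => Real.rpow_nonneg (hu i) p) (fun i _ => Real.rpow_nonneg (hv i) (q - p))
  have hpow : ∀ {t r : ℝ}, 0 ≤ t → r ≠ 0 → (t ^ r) ^ (r / q)⁻¹ = t ^ q := fun ht hr => by
    rw [← Real.rpow_mul ht, inv_div, mul_div_cancel₀ _ hr]
  simpa only [hpow (hu _) hp.ne', hpow (hv _) (sub_pos.mpr hpq).ne', one_div, inv_inv] using holder

noncomputable def signPow (α t : ℝ) : ℝ := Real.sign t * |t| ^ α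

namespace signPow

variable {α β : ℝ}

lemma of_nonneg (hα : α ≠ 0) {t : ℝ} (ht : 0 ≤ t) : signPow α t = t ^ α := by
  rcases ht.eq_or_lt with rfl | ht
  · simp [signPow, Real.zero_rpow hα]
  · rw [signPow, Real.sign_of_pos ht, abs_of_pos ht, one_mul]

lemma neg (α t : ℝ) : signPow α (-t) = -signPow α t := by
  rw [signPow, signPow, Real.sign_neg, abs_neg, neg_mul]

lemma abs_eq (hα : α ≠ 0) (t : ℝ) : |signPow α t| = |t| ^ α := by
  obtain ⟨s, hs, rfl | rfl⟩ := exists_nonneg_eq_or_eq_neg t <;>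
    simp only [neg, abs_neg, of_nonneg hα hs, abs_of_nonneg hs,
      abs_of_nonneg (Real.rpow_nonneg hs α)]

lemma one (t : ℝ) : signPow 1 t = t := by
  obtain ⟨s, hs, rfl | rfl⟩ := exists_nonneg_eq_or_eq_neg t <;>
    simp only [neg, of_nonneg one_ne_zero hs, Real.rpow_one]

lemma comp (hα : α ≠ 0) (hβ : β ≠ 0) (t : ℝ) :
    signPow α (signPow β t) = signPow (β * α) t := by
  obtain ⟨s, hs, rfl | rfl⟩ := exists_nonneg_eq_or_eq_neg t <;>
    simp only [neg, of_nonneg hβ hs, of_nonneg hα (Real.rpow_nonneg hs β),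
      of_nonneg (mul_ne_zero hβ hα) hs, Real.rpow_mul hs]

lemma abs_sub_le_of_nonneg (hα : 1 ≤ α) {a b : ℝ} (ha : 0 ≤ a) (hb : 0 ≤ b) :
    |signPow α a - signPow α b| ≤ α * |a - b| * (|a| + |b|) ^ (α - 1) := by
  wlog hba : b ≤ a generalizing a b
  · rw [abs_sub_comm, abs_sub_comm a, add_comm]
    exact this hb ha (le_of_not_ge hba)
  have hα0 : α ≠ 0 := by positivity
  rw [of_nonneg hα0 ha, of_nonneg hα0 hb, abs_of_nonneg (sub_nonneg.mpr hba),
    abs_of_nonneg (sub_nonneg.mpr (Real.rpow_le_rpow hb hba (by positivity))),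
    abs_of_nonneg ha, abs_of_nonneg hb]
  calc a ^ α - b ^ α ≤ α * (a - b) * a ^ (α - 1) :=
        Real.rpow_sub_rpow_le_mul_rpow_sub_one hα ha hb
    _ ≤ α * (a - b) * (a + b) ^ (α - 1) := by gcongr; linarith

lemma abs_sub_neg_le (hα : 1 ≤ α) {a b : ℝ} (ha : 0 ≤ a) (hb : 0 ≤ b) :
    |signPow α a - signPow α (-b)| ≤ α * |a - -b| * (|a| + |-b|) ^ (α - 1) := by
  have hα0 : α ≠ 0 := by positivity
  have hab : 0 ≤ a + b := add_nonneg ha hb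
  rw [neg, of_nonneg hα0 ha, of_nonneg hα0 hb, sub_neg_eq_add, sub_neg_eq_add, abs_neg,
    abs_of_nonneg ha, abs_of_nonneg hb, abs_of_nonneg hab, abs_of_nonneg (by positivity)]
  calc a ^ α + b ^ α ≤ (a + b) ^ α := Real.add_rpow_le_rpow_add ha hb hα
    _ = 1 * (a + b) * (a + b) ^ (α - 1) := by
        rw [one_mul, ← Real.rpow_one_add' hab (by linarith), add_sub_cancel]
    _ ≤ α * (a + b) * (a + b) ^ (α - 1) := by gcongr

lemma abs_sub_le (hα : 1 ≤ α) (a b : ℝ) :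
    |signPow α a - signPow α b| ≤ α * |a - b| * (|a| + |b|) ^ (α - 1) := by
  have hsymm : ∀ a b, |signPow α a - signPow α b| ≤ α * |a - b| * (|a| + |b|) ^ (α - 1) →
      |signPow α b - signPow α a| ≤ α * |b - a| * (|b| + |a|) ^ (α - 1) := by
    intro a b h
    rwa [abs_sub_comm, abs_sub_comm b, add_comm]
  have hneg : ∀ a b, |signPow α a - signPow α b| ≤ α * |a - b| * (|a| + |b|) ^ (α - 1) →
      |signPow α (-a) - signPow α (-b)| ≤ α * |-a - -b| * (|-a| + |-b|) ^ (α - 1) := by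
    intro a b h
    rwa [neg, neg, neg_sub_neg, neg_sub_neg, abs_sub_comm, abs_sub_comm b, abs_neg, abs_neg]
  obtain ⟨s, hs, rfl | rfl⟩ := exists_nonneg_eq_or_eq_neg a <;>
  obtain ⟨u, hu, rfl | rfl⟩ := exists_nonneg_eq_or_eq_neg b
  · exact abs_sub_le_of_nonneg hα hs hu
  · exact abs_sub_neg_le hα hs hu
  · exact hsymm _ _ (abs_sub_neg_le hα hu hs)
  · exact hneg _ _ (abs_sub_le_of_nonneg hα hs hu)

end signPow

section pNorm

variable {d : ℕ} {p q : ℝ}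

lemma pNorm_nonneg (p : ℝ) (x : Fin d → ℝ) : 0 ≤ pNorm p x :=
  Real.rpow_nonneg (Finset.sum_nonneg fun i _ => Real.rpow_nonneg (abs_nonneg (x i)) p) _

lemma pNorm_rpow (hp : 0 < p) (x : Fin d → ℝ) : pNorm p x ^ p = ∑ i, |x i| ^ p := by
  rw [pNorm, ← Real.rpow_mul (Finset.sum_nonneg fun i _ => Real.rpow_nonneg (abs_nonneg (x i)) p),
    one_div_mul_cancel hp.ne', Real.rpow_one]

lemma pNorm_le_iff (hp : 0 < p) {x : Fin d → ℝ} {r : ℝ} (hr : 0 ≤ r) :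
    pNorm p x ≤ r ↔ ∑ i, |x i| ^ p ≤ r ^ p := by
  rw [← pNorm_rpow hp, Real.rpow_le_rpow_iff (pNorm_nonneg p x) hr hp]

lemma pNorm_eq_one_iff (hp : 0 < p) {x : Fin d → ℝ} : pNorm p x = 1 ↔ ∑ i, |x i| ^ p = 1 := by
  rw [← pNorm_rpow hp, ← Real.rpow_left_inj (pNorm_nonneg p x) zero_le_one hp.ne', Real.one_rpow]

lemma pNorm_smul (hp : 0 < p) (c : ℝ) (x : Fin d → ℝ) : pNorm p (c • x) = |c| * pNorm p x := by
  simp only [pNorm, Pi.smul_apply, smul_eq_mul, abs_mul,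
    Real.mul_rpow (abs_nonneg c) (abs_nonneg _), ← Finset.mul_sum]
  rw [Real.mul_rpow (by positivity) (Finset.sum_nonneg fun i _ => by positivity),
    ← Real.rpow_mul (abs_nonneg c), mul_one_div_cancel hp.ne', Real.rpow_one]

lemma pNorm_sub_comm (p : ℝ) (x y : Fin d → ℝ) : pNorm p (x - y) = pNorm p (y - x) := by
  simp only [pNorm, Pi.sub_apply, abs_sub_comm]

lemma pNorm_abs (p : ℝ) (x : Fin d → ℝ) : pNorm p (fun i => |x i|) = pNorm p x := by
  simp only [pNorm, abs_abs]

lemma pNorm_add_le (hq : 1 ≤ q) (x y : Fin d → ℝ) : pNorm q (x + y) ≤ pNorm q x + pNorm q y :=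
  Real.Lp_add_le Finset.univ x y hq

lemma mem_vadd_smul_pBall_iff (hp : 0 < p) {c z : Fin d → ℝ} {r : ℝ} (hr : 0 < r) :
    z ∈ c +ᵥ r • pBall p d ↔ pNorm p (z - c) ≤ r := by
  rw [Set.mem_vadd_set_iff_neg_vadd_mem, Set.mem_smul_set_iff_inv_smul_mem₀ hr.ne', pBall,
    Set.mem_ofPred_eq, pNorm_smul hp, abs_inv, abs_of_pos hr, inv_mul_le_iff₀ hr, mul_one,
    vadd_eq_add, neg_add_eq_sub]

lemma sum_abs_add_abs_rpow_le (hq : 1 ≤ q) {x y : Fin d → ℝ}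
    (hx : pNorm q x ≤ 1) (hy : pNorm q y ≤ 1) :
    ∑ i, (|x i| + |y i|) ^ q ≤ 2 ^ q := by
  have htri := pNorm_add_le hq (fun i => |x i|) (fun i => |y i|)
  rw [pNorm_abs, pNorm_abs] at htri
  have h2 := (pNorm_le_iff (by linarith) zero_le_two).mp (htri.trans (by linarith))
  calc ∑ i, (|x i| + |y i|) ^ q = ∑ i, |(|x i| + |y i|)| ^ q :=
        Finset.sum_congr rfl fun i _ => by
          rw [abs_of_nonneg (add_nonneg (abs_nonneg (x i)) (abs_nonneg (y i)))]
    _ ≤ 2 ^ q := h2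

end pNorm

/-- `mazurMap (2 / p)` is the paper's Mazur map `M_p`. -/
noncomputable def mazurMap (α : ℝ) {d : ℕ} (x : Fin d → ℝ) : Fin d → ℝ :=
  fun i => signPow α (x i)

section mazurMap

variable {d : ℕ} {p q : ℝ}

lemma mazurMap_mem_pSphere (hp : 0 < p) (hq : 0 < q) {x : Fin d → ℝ} (hx : x ∈ pSphere q d) :
    mazurMap (q / p) x ∈ pSphere p d := by
  rw [pSphere, Set.mem_ofPred_eq, pNorm_eq_one_iff hq] at hx
  rw [pSphere, Set.mem_ofPred_eq, pNorm_eq_one_iff hp, ← hx]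
  refine Finset.sum_congr rfl fun i _ => ?_
  rw [mazurMap, signPow.abs_eq (by positivity), ← Real.rpow_mul (abs_nonneg _),
    div_mul_cancel₀ _ hp.ne']

lemma pSphere_subset_image_mazurMap (hp : 0 < p) (hq : 0 < q) :
    pSphere p d ⊆ mazurMap (q / p) '' pSphere q d := by
  intro z hz
  refine ⟨mazurMap (p / q) z, mazurMap_mem_pSphere hq hp hz, funext fun i => ?_⟩
  rw [mazurMap, mazurMap, signPow.comp (by positivity) (by positivity),
    div_mul_div_cancel₀ hq.ne', div_self hp.ne', signPow.one]

lemma pNorm_mazurMap_sub_le (hp : 0 < p) (hpq : p < q) (hq : 1 ≤ q)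
    {x y : Fin d → ℝ} (hx : pNorm q x ≤ 1) (hy : pNorm q y ≤ 1) :
    pNorm p (mazurMap (q / p) x - mazurMap (q / p) y) ≤
      q / p * 2 ^ ((q - p) / p) * pNorm q (x - y) := by
  set α := q / p
  set δ := pNorm q (x - y)
  have hq0 : 0 < q := hp.trans hpq
  have hα : 1 ≤ α := (one_le_div hp).mpr hpq.le
  have hδ : 0 ≤ δ := pNorm_nonneg q (x - y)
  have pointwise : ∀ i, |mazurMap α x i - mazurMap α y i| ^ p ≤
      α ^ p * (|x i - y i| ^ p * (|x i| + |y i|) ^ (q - p)) := fun i => by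
    calc _ ≤ (α * |x i - y i| * (|x i| + |y i|) ^ (α - 1)) ^ p :=
          Real.rpow_le_rpow (abs_nonneg _) (signPow.abs_sub_le hα _ _) hp.le
      _ = _ := by
          rw [Real.mul_rpow (by positivity) (by positivity), Real.mul_rpow (by positivity)
            (by positivity), ← Real.rpow_mul (by positivity), sub_one_mul,
            div_mul_cancel₀ _ hp.ne', mul_assoc]
  have holder := Real.sum_rpow_mul_rpow_sub_le Finset.univ hp hpq
    (u := fun i => |x i - y i|) (v := fun i => |x i| + |y i|) (fun i => abs_nonneg _)
    (fun i => by positivity)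
  have hδq : ∑ i, |x i - y i| ^ q = δ ^ q := (pNorm_rpow hq0 (x - y)).symm
  rw [hδq] at holder
  rw [pNorm_le_iff hp (by positivity)]
  calc ∑ i, |(mazurMap α x - mazurMap α y) i| ^ p ≤
        α ^ p * ∑ i, |x i - y i| ^ p * (|x i| + |y i|) ^ (q - p) := by
        rw [Finset.mul_sum]
        exact Finset.sum_le_sum fun i _ => pointwise i
    _ ≤ α ^ p * ((δ ^ q) ^ (p / q) * (2 ^ q) ^ ((q - p) / q)) := by
        gcongr
        refine holder.trans ?_
        gcongr
        exact sum_abs_add_abs_rpow_le hq hx hy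
    _ = (α * 2 ^ ((q - p) / p) * δ) ^ p := by
        rw [← Real.rpow_mul hδ, ← Real.rpow_mul zero_le_two, Real.mul_rpow (by positivity) hδ,
          Real.mul_rpow (by positivity) (by positivity), ← Real.rpow_mul zero_le_two,
          mul_div_cancel₀ _ hq0.ne', mul_div_cancel₀ _ hq0.ne', div_mul_cancel₀ _ hp.ne']
        ring

end mazurMap

def coveringRadii {d : ℕ} (K B : Set (Fin d → ℝ)) (k : ℕ) : Set ℝ :=
  {ε : ℝ | 0 < ε ∧ ∃ c : Fin (2 ^ (k - 1)) → (Fin d → ℝ), K ⊆ ⋃ j, (c j +ᵥ ε • B)}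

section coveringRadii

variable {d e : ℕ} {K B : Set (Fin d → ℝ)} {K' B' : Set (Fin e → ℝ)} {k : ℕ}

lemma one_mem_coveringRadii (h : K ⊆ B) : 1 ∈ coveringRadii K B k :=
  ⟨one_pos, fun _ => 0, fun x hx =>
    Set.mem_iUnion.mpr ⟨⟨0, Nat.two_pow_pos _⟩, by rw [zero_vadd, one_smul]; exact h hx⟩⟩

lemma entropyNumber_le_mul {L : ℝ} (hL : 0 ≤ L) (hne : (coveringRadii K B k).Nonempty)
    (h : ∀ ε ∈ coveringRadii K B k, L * ε ∈ coveringRadii K' B' k) :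
    entropyNumber K' B' k ≤ L * entropyNumber K B k := by
  change sInf (coveringRadii K' B' k) ≤ L * sInf (coveringRadii K B k)
  rw [← smul_eq_mul, ← Real.sInf_smul_of_nonneg hL]
  refine csInf_le_csInf ⟨0, fun ε hε => hε.1.le⟩ (hne.smul_set) ?_
  rintro _ ⟨ε, hε, rfl⟩
  exact h ε hε

lemma mul_mem_coveringRadii_of_subset_image {f : (Fin d → ℝ) → (Fin e → ℝ)} {L ε : ℝ}
    (hK' : K' ⊆ f '' K) (hL : 0 < L)
    (hf : ∀ c : Fin d → ℝ, ∀ x ∈ K, ∀ y ∈ K,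
      x ∈ c +ᵥ ε • B → y ∈ c +ᵥ ε • B → f x ∈ f y +ᵥ (L * ε) • B')
    (hε : ε ∈ coveringRadii K B k) : L * ε ∈ coveringRadii K' B' k := by
  classical
  obtain ⟨hε, c, hcover⟩ := hε
  refine ⟨mul_pos hL hε, fun j => if h : ∃ y ∈ K, y ∈ c j +ᵥ ε • B then f h.choose else 0, ?_⟩
  intro z hz
  obtain ⟨x, hx, rfl⟩ := hK' hz
  obtain ⟨j, hj⟩ := Set.mem_iUnion.mp (hcover hx)
  have hex : ∃ y ∈ K, y ∈ c j +ᵥ ε • B := ⟨x, hx, hj⟩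
  refine Set.mem_iUnion.mpr ⟨j, ?_⟩
  simp only [dif_pos hex]
  exact hf (c j) x hx _ hex.choose_spec.1 hj hex.choose_spec.2

end coveringRadii

section mazurEntropy

variable {d : ℕ} {p q : ℝ}

lemma mazurMap_mem_vadd_smul_pBall (hp : 0 < p) (hpq : p < q) (hq : 1 ≤ q)
    {c x y : Fin d → ℝ} {ε : ℝ} (hε : 0 < ε) (hx : pNorm q x ≤ 1) (hy : pNorm q y ≤ 1)
    (hxc : x ∈ c +ᵥ ε • pBall q d) (hyc : y ∈ c +ᵥ ε • pBall q d) :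
    mazurMap (q / p) x ∈
      mazurMap (q / p) y +ᵥ (2 * (q / p * 2 ^ ((q - p) / p)) * ε) • pBall p d := by
  have hq0 : 0 < q := hp.trans hpq
  rw [mem_vadd_smul_pBall_iff hq0 hε] at hxc hyc
  have hxy : pNorm q (x - y) ≤ 2 * ε := by
    calc pNorm q (x - y) = pNorm q ((x - c) + (c - y)) := by rw [sub_add_sub_cancel]
      _ ≤ pNorm q (x - c) + pNorm q (y - c) := by
          rw [pNorm_sub_comm q y]
          exact pNorm_add_le hq _ _
      _ ≤ 2 * ε := by linarith
  rw [mem_vadd_smul_pBall_iff hp (by positivity)]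
  calc _ ≤ q / p * 2 ^ ((q - p) / p) * pNorm q (x - y) := pNorm_mazurMap_sub_le hp hpq hq hx hy
    _ ≤ q / p * 2 ^ ((q - p) / p) * (2 * ε) := by gcongr
    _ = _ := by ring

lemma entropyNumber_pSphere_le (hp : 0 < p) (hpq : p < q) (hq : 1 ≤ q) (k : ℕ) :
    entropyNumber (pSphere p d) (pBall p d) k ≤
      2 * (q / p * 2 ^ ((q - p) / p)) * entropyNumber (pSphere q d) (pBall q d) k :=
  entropyNumber_le_mul (by positivity) ⟨1, one_mem_coveringRadii fun _ hx => le_of_eq hx⟩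
    fun _ hε => mul_mem_coveringRadii_of_subset_image
      (pSphere_subset_image_mazurMap hp (hp.trans hpq)) (by positivity)
      (fun _ _ hx _ hy hxc hyc =>
        mazurMap_mem_vadd_smul_pBall hp hpq hq hε.1 hx.le hy.le hxc hyc) hε

end mazurEntropy

/-- For `0 < p < 2` there is `L ≥ 1` depending only on `p` such that for all
`d ≥ 2` and all `k`, `e_k(S_p^{d-1}, ℓ_p^d) ≤ L · e_k(S_2^{d-1}, ℓ_2^d)`
(via the Mazur map). -/
theorem entropy_pSphere_le_mazur (p : ℝ) (hp : 0 < p) (hp2 : p < 2) :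
    ∃ L : ℝ, 1 ≤ L ∧ ∀ d k : ℕ, 2 ≤ d →
      entropyNumber (pSphere p d) (pBall p d) k ≤
        L * entropyNumber (pSphere 2 d) (pBall 2 d) k := by
  have h2p : 1 ≤ 2 / p := (one_le_div hp).mpr hp2.le
  have hpow : 1 ≤ (2 : ℝ) ^ ((2 - p) / p) :=
    Real.one_le_rpow one_le_two (div_nonneg (sub_nonneg.mpr hp2.le) hp.le)
  exact ⟨2 * (2 / p * 2 ^ ((2 - p) / p)), by nlinarith,
    fun d k _ => entropyNumber_pSphere_le hp hp2 one_le_two k⟩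
end

section
/- Let d ≥ 2 and let ‖·‖_X be a continuous quasi-norm on ℝ^d that is monotone (for x, y in the same closed orthant with |x_j| ≤ |y_j| for all j one has ‖x‖_X ≤ ‖y‖_X) and strictly monotone in the sense that |x_j| < |y_j| for all j implies ‖x‖_X < ‖y‖_X. Let ‖·‖_Y be a quasi-norm on ℝ^d with unit ball B_Y, and set M := sup{‖u‖_Y : ‖u‖_∞ ≤ 1}. Let S_X = {x : ‖x‖_X = 1}, B_X = {x : ‖x‖_X ≤ 1}, and H_i = {x ∈ ℝ^d : x_i = 0}. Then for every natural number k > d + ⌈log₂ d⌉, e_k(S_X, B_Y) ≤ 2 M · max_{1≤i≤d} e_{k − d − ⌈log₂ d⌉}(B_X ∩ H_i, B_∞^d ∩ H_i), where B_∞^d = {x : ‖x‖_∞ ≤ 1}. -/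
open scoped Pointwise BigOperators

/-- A quasi-norm on `ℝ^d`: nonnegative, definite, absolutely homogeneous, and satisfying the
quasi-triangle inequality `‖x + y‖ ≤ C(‖x‖ + ‖y‖)` for some `C ≥ 1`. -/
def IsQuasiNorm {d : ℕ} (f : (Fin d → ℝ) → ℝ) : Prop :=
  (∀ x, 0 ≤ f x) ∧ (∀ x, f x = 0 ↔ x = 0) ∧
  (∀ (l : ℝ) (x), f (l • x) = |l| * f x) ∧
  (∃ C : ℝ, 1 ≤ C ∧ ∀ x y, f (x + y) ≤ C * (f x + f y))

/-- The orthogonal projection of `ℝ^d` onto the hyperplane `{x : x_i = 0}`,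
setting the `i`-th coordinate to zero. -/
def proj {d : ℕ} (i : Fin d) (x : Fin d → ℝ) : Fin d → ℝ :=
  Function.update x i 0

/-- Monotonicity of a quasi-norm: for `x, y` lying in the same closed orthant
(equivalently `x_j y_j ≥ 0` for all `j`) with `|x_j| ≤ |y_j|` for all `j`, `‖x‖ ≤ ‖y‖`. -/
def IsMonotoneQuasiNorm {d : ℕ} (f : (Fin d → ℝ) → ℝ) : Prop :=
  ∀ x y : Fin d → ℝ, (∀ j, 0 ≤ x j * y j) → (∀ j, |x j| ≤ |y j|) → f x ≤ f y


/-!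
Cut `ℝ^d` into cubes of side `2ε`. A point `x` of the sphere `S_X` is pushed diagonally
towards the origin, every coordinate by the same number of cells, until some coordinate `j`
reaches a cell touching the hyperplane `H_j`. By monotonicity the pushed point, with its
`j`-th coordinate set to `0`, lies in `B_X ∩ H_j`, so an `ε`-covering of that section by
`2^(k-d-⌈log₂ d⌉-1)` balls leaves at most `d · 2^(k-d-⌈log₂ d⌉-1) · 2^d ≤ 2^(k-1)` possible
base cells (the axis `j`, a ball of the covering, and one of two cells on each axis). Along
the diagonal ray of cells above a base cell, strict monotonicity confines the sphere to two
consecutive cells, which fit in one `ℓ_∞`-ball of radius `2ε`; and an `ℓ_∞`-ball of radius `r`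
lies in a `B_Y`-ball of radius `M r`.
-/

open Metric Set

section SupNorm

variable {d : ℕ}

theorem supNorm_eq_norm (x : Fin d → ℝ) : supNorm x = ‖x‖ :=
  le_antisymm (Real.iSup_le (fun i => norm_le_pi_norm x i) (norm_nonneg x))
    ((pi_norm_le_iff_of_nonneg (Real.iSup_nonneg fun i => abs_nonneg (x i))).2 fun i =>
      le_ciSup (finite_range fun j => |x j|).bddAbove i)

theorem supBall_eq_closedBall : supBall d = closedBall 0 1 := by
  ext x
  simp [supBall, supNorm_eq_norm]

theorem balanced_supBall_inter_hyperplane (i : Fin d) :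
    Balanced ℝ (supBall d ∩ {x | x i = 0}) := by
  rw [supBall_eq_closedBall]
  refine balanced_closedBall_zero.inter fun a _ => smul_set_subset_iff.2 fun x hx => ?_
  simp_all

theorem inter_hyperplane_subset_smul_supBall {K : Set (Fin d → ℝ)} {R : ℝ} (hR : 0 < R)
    (hK : K ⊆ closedBall 0 R) (i : Fin d) :
    K ∩ {x | x i = 0} ⊆ R • (supBall d ∩ {x | x i = 0}) := by
  rintro x ⟨hxK, hxi⟩
  rw [mem_smul_set_iff_inv_smul_mem₀ hR.ne', supBall_eq_closedBall]
  refine ⟨?_, by simp_all⟩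
  rw [mem_closedBall_zero_iff, norm_smul, norm_inv, Real.norm_of_nonneg hR.le,
    inv_mul_le_iff₀ hR, mul_one]
  exact mem_closedBall_zero_iff.1 (hK hxK)

theorem vadd_smul_supBall_inter_subset (c : Fin d → ℝ) {ε : ℝ} (hε : 0 ≤ ε)
    (S : Set (Fin d → ℝ)) :
    c +ᵥ ε • (supBall d ∩ S) ⊆ closedBall c ε := by
  have hball : ε • supBall d = closedBall 0 ε := by
    rw [supBall_eq_closedBall, smul_unitClosedBall, Real.norm_of_nonneg hε]
  rw [← vadd_closedBall_zero, ← hball]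
  exact vadd_set_mono (smul_set_mono inter_subset_left)

end SupNorm

section EntropyNumber

variable {d : ℕ} {K B : Set (Fin d → ℝ)} {k : ℕ}

theorem entropyNumber_nonneg : 0 ≤ entropyNumber K B k :=
  Real.sInf_nonneg fun _ h => h.1.le

theorem entropyNumber_le_of_subset_iUnion {ε : ℝ} (hε : 0 < ε)
    (c : Fin (2 ^ (k - 1)) → Fin d → ℝ) (hK : K ⊆ ⋃ j, c j +ᵥ ε • B) :
    entropyNumber K B k ≤ ε :=
  csInf_le ⟨0, fun _ h => h.1.le⟩ ⟨hε, c, hK⟩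

theorem exists_subset_iUnion_of_entropyNumber_lt (hB : Balanced ℝ B) {R : ℝ} (hR : 0 < R)
    (hKR : K ⊆ R • B) {ε : ℝ} (h : entropyNumber K B k < ε) :
    ∃ c : Fin (2 ^ (k - 1)) → Fin d → ℝ, K ⊆ ⋃ j, c j +ᵥ ε • B := by
  have hne : {γ : ℝ | 0 < γ ∧ ∃ c : Fin (2 ^ (k - 1)) → Fin d → ℝ,
      K ⊆ ⋃ j, c j +ᵥ γ • B}.Nonempty :=
    ⟨R, hR, 0, fun x hx => mem_iUnion.2 ⟨⟨0, by positivity⟩, by simpa using hKR hx⟩⟩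
  obtain ⟨γ, ⟨hγ, c, hc⟩, hγε⟩ := exists_lt_of_csInf_lt hne h
  refine ⟨c, hc.trans (iUnion_mono fun j => vadd_set_mono (hB.smul_mono ?_))⟩
  rw [Real.norm_of_nonneg hγ.le, Real.norm_of_nonneg (hγ.trans hγε).le]
  exact hγε.le

end EntropyNumber

namespace IsQuasiNorm

variable {d : ℕ} {f : (Fin d → ℝ) → ℝ}

theorem map_zero (hf : IsQuasiNorm f) : f 0 = 0 := (hf.2.1 0).2 rfl

theorem pos (hf : IsQuasiNorm f) {x : Fin d → ℝ} (hx : x ≠ 0) : 0 < f x :=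
  (hf.1 x).lt_of_ne' (mt (hf.2.1 x).1 hx)

theorem map_smul (hf : IsQuasiNorm f) (l : ℝ) (x : Fin d → ℝ) : f (l • x) = |l| * f x :=
  hf.2.2.1 l x

theorem map_sum_le (hf : IsQuasiNorm f) {C : ℝ} (hC : 1 ≤ C)
    (htri : ∀ x y, f (x + y) ≤ C * (f x + f y)) {ι : Type*} (s : Finset ι)
    (g : ι → Fin d → ℝ) : f (∑ i ∈ s, g i) ≤ C ^ s.card * ∑ i ∈ s, f (g i) := by
  classical
  induction s using Finset.induction with
  | empty => simp [hf.map_zero]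
  | @insert a s ha ih =>
    rw [Finset.sum_insert ha, Finset.sum_insert ha, Finset.card_insert_of_notMem ha]
    have hCs : C ≤ C ^ (s.card + 1) := le_self_pow₀ hC s.card.succ_ne_zero
    calc f (g a + ∑ i ∈ s, g i) ≤ C * (f (g a) + C ^ s.card * ∑ i ∈ s, f (g i)) :=
          (htri _ _).trans (by gcongr)
      _ = C * f (g a) + C ^ (s.card + 1) * ∑ i ∈ s, f (g i) := by ring
      _ ≤ C ^ (s.card + 1) * (f (g a) + ∑ i ∈ s, f (g i)) := by
          nlinarith [hf.1 (g a)]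

theorem bddAbove_image_supBall (hf : IsQuasiNorm f) : BddAbove (f '' supBall d) := by
  obtain ⟨C, hC, htri⟩ := hf.2.2.2
  refine ⟨C ^ d * ∑ i, f (Pi.single i 1), ?_⟩
  rintro _ ⟨u, hu, rfl⟩
  rw [supBall_eq_closedBall, mem_closedBall_zero_iff] at hu
  calc f u = f (∑ i, u i • Pi.single i 1) := by rw [← pi_eq_sum_univ' u]
    _ ≤ C ^ d * ∑ i, f (u i • Pi.single i 1) := by
        simpa using hf.map_sum_le hC htri Finset.univ fun i => u i • Pi.single i 1
    _ ≤ C ^ d * ∑ i, f (Pi.single i 1) := by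
        have hC0 : 0 ≤ C := by linarith
        gcongr with i
        rw [hf.map_smul]
        exact mul_le_of_le_one_left (hf.1 _) ((norm_le_pi_norm u i).trans hu)

theorem le_sSup_mul_norm (hf : IsQuasiNorm f) (u : Fin d → ℝ) :
    f u ≤ sSup (f '' supBall d) * ‖u‖ := by
  rcases eq_or_ne u 0 with rfl | hu
  · simp [hf.map_zero]
  have hnu : 0 < ‖u‖ := norm_pos_iff.2 hu
  have hunit : ‖u‖⁻¹ • u ∈ supBall d := by
    rw [supBall_eq_closedBall, mem_closedBall_zero_iff, norm_smul, norm_inv, norm_norm,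
      inv_mul_cancel₀ hnu.ne']
  calc f u = ‖u‖ * f (‖u‖⁻¹ • u) := by
        rw [hf.map_smul, abs_of_pos (inv_pos.2 hnu), mul_inv_cancel_left₀ hnu.ne']
    _ ≤ ‖u‖ * sSup (f '' supBall d) :=
        mul_le_mul_of_nonneg_left (le_csSup hf.bddAbove_image_supBall ⟨_, hunit, rfl⟩) hnu.le
    _ = sSup (f '' supBall d) * ‖u‖ := mul_comm _ _

theorem sSup_image_supBall_pos [Nonempty (Fin d)] (hf : IsQuasiNorm f) :
    0 < sSup (f '' supBall d) := by
  let i : Fin d := Classical.arbitrary _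
  have hei : Pi.single i (1 : ℝ) ∈ supBall d := by
    rw [supBall_eq_closedBall, mem_closedBall_zero_iff, Pi.norm_single, norm_one]
  exact (hf.pos (by simp)).trans_le (le_csSup hf.bddAbove_image_supBall ⟨_, hei, rfl⟩)

theorem closedBall_subset_vadd_smul [Nonempty (Fin d)] (hf : IsQuasiNorm f) (c : Fin d → ℝ)
    {r : ℝ} (hr : 0 < r) :
    closedBall c r ⊆ c +ᵥ (sSup (f '' supBall d) * r) • {x | f x ≤ 1} := by
  intro x hx
  have hρ : 0 < sSup (f '' supBall d) * r := mul_pos hf.sSup_image_supBall_pos hr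
  rw [mem_vadd_set_iff_neg_vadd_mem, mem_smul_set_iff_inv_smul_mem₀ hρ.ne', mem_ofPred_eq,
    hf.map_smul, abs_of_pos (inv_pos.2 hρ), inv_mul_le_one₀ hρ, vadd_eq_add, neg_add_eq_sub]
  calc f (x - c) ≤ sSup (f '' supBall d) * ‖x - c‖ := hf.le_sSup_mul_norm _
    _ ≤ sSup (f '' supBall d) * r :=
        mul_le_mul_of_nonneg_left (mem_closedBall_iff_norm.1 hx) hf.sSup_image_supBall_pos.le

end IsQuasiNorm

namespace IsMonotoneQuasiNorm

variable {d : ℕ} {f : (Fin d → ℝ) → ℝ}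

theorem abs_apply_mul_le (hm : IsMonotoneQuasiNorm f) (hf : IsQuasiNorm f) (x : Fin d → ℝ)
    (i : Fin d) : |x i| * f (Pi.single i 1) ≤ f x := by
  rw [← hf.map_smul, ← Pi.single_smul, smul_eq_mul, mul_one]
  refine hm _ _ (fun j => ?_) (fun j => ?_) <;> by_cases hj : j = i <;> simp [hj, mul_self_nonneg]

theorem exists_subset_closedBall (hm : IsMonotoneQuasiNorm f) (hf : IsQuasiNorm f) :
    ∃ R > 0, {x | f x ≤ 1} ⊆ closedBall 0 R := by
  have hR : 0 ≤ ∑ i, (f (Pi.single i 1))⁻¹ :=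
    Finset.sum_nonneg fun i _ => inv_nonneg.2 (hf.1 _)
  refine ⟨1 + ∑ i, (f (Pi.single i 1))⁻¹, by positivity, fun x hx => ?_⟩
  rw [mem_closedBall_zero_iff, pi_norm_le_iff_of_nonneg (by positivity)]
  intro i
  have hei : 0 < f (Pi.single i 1) := hf.pos (by simp)
  calc ‖x i‖ ≤ (f (Pi.single i 1))⁻¹ := by
        rw [Real.norm_eq_abs, ← one_div, le_div_iff₀ hei]
        exact (hm.abs_apply_mul_le hf x i).trans hx
    _ ≤ ∑ j, (f (Pi.single j 1))⁻¹ :=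
        Finset.single_le_sum (f := fun j => (f (Pi.single j 1))⁻¹)
          (fun j _ => inv_nonneg.2 (hf.1 _)) (Finset.mem_univ i)
    _ ≤ 1 + ∑ j, (f (Pi.single j 1))⁻¹ := le_add_of_nonneg_left zero_le_one

end IsMonotoneQuasiNorm

def IsStrictlyMonotoneQuasiNorm {d : ℕ} (f : (Fin d → ℝ) → ℝ) : Prop :=
  ∀ x y : Fin d → ℝ, (∀ j, 0 ≤ x j * y j) → (∀ j, |x j| < |y j|) → f x < f y

section Grid

def awaySign (n : ℤ) : ℤ := if 0 ≤ n then 1 else -1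

/-- The number of cells strictly between the cell `[n * s, (n + 1) * s)` and the origin. -/
def cellDepth (n : ℤ) : ℕ := if 0 ≤ n then n.toNat else (-n - 1).toNat

theorem awaySign_sub_of_le_cellDepth {n : ℤ} {t : ℕ} (ht : t ≤ cellDepth n) :
    awaySign (n - t * awaySign n) = awaySign n := by
  unfold awaySign cellDepth at *
  split_ifs at * <;> omega

theorem sub_cellDepth_mul_awaySign (n : ℤ) :
    n - cellDepth n * awaySign n = 0 ∨ n - cellDepth n * awaySign n = -1 := by
  unfold awaySign cellDepth
  split_ifs <;> omega

variable {s : ℝ}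

theorem floor_div_eq_iff (hs : 0 < s) {u : ℝ} {n : ℤ} :
    ⌊u / s⌋ = n ↔ n * s ≤ u ∧ u < (n + 1) * s := by
  rw [Int.floor_eq_iff, le_div_iff₀ hs, div_lt_iff₀ hs]

theorem floor_div_sub_intCast_mul (hs : 0 < s) (u : ℝ) (m : ℤ) :
    ⌊(u - m * s) / s⌋ = ⌊u / s⌋ - m := by
  rw [sub_div, mul_div_cancel_right₀ _ hs.ne', Int.floor_sub_intCast]

theorem mul_nonneg_and_abs_le_of_le_cellDepth (hs : 0 < s) {u : ℝ} {n : ℤ}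
    (hn : ⌊u / s⌋ = n) {t : ℕ} (ht : t ≤ cellDepth n) :
    0 ≤ (u - t * awaySign n * s) * u ∧ |u - t * awaySign n * s| ≤ |u| := by
  obtain ⟨hlo, hhi⟩ := (floor_div_eq_iff hs).1 hn
  have hts : 0 ≤ (t : ℝ) * s := by positivity
  unfold awaySign cellDepth at *
  split_ifs at * with hn0
  · have htn : (t : ℝ) ≤ n := by exact_mod_cast (show (t : ℤ) ≤ n by omega)
    simp only [Int.cast_one, mul_one]
    have hv : 0 ≤ u - t * s := by nlinarith
    have hu : 0 ≤ u := by linarith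
    rw [abs_of_nonneg hv, abs_of_nonneg hu]
    exact ⟨mul_nonneg hv hu, by linarith⟩
  · have htn : (t : ℝ) ≤ -n - 1 := by exact_mod_cast (show (t : ℤ) ≤ -n - 1 by omega)
    simp only [Int.cast_neg, Int.cast_one, mul_neg, mul_one, neg_mul, sub_neg_eq_add]
    have hv : u + t * s ≤ 0 := by nlinarith
    have hu : u ≤ 0 := by nlinarith
    rw [abs_of_nonpos hv, abs_of_nonpos hu]
    exact ⟨mul_nonneg_of_nonpos_of_nonpos hv hu, by linarith⟩

theorem mul_nonneg_and_abs_lt_of_floor_div_eq (hs : 0 < s) {u u' : ℝ} {b : ℤ} {t t' : ℕ}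
    (hu : ⌊u / s⌋ = b + t * awaySign b) (hu' : ⌊u' / s⌋ = b + t' * awaySign b)
    (htt : t + 2 ≤ t') : 0 ≤ u * u' ∧ |u| < |u'| := by
  rw [floor_div_eq_iff hs] at hu hu'
  obtain ⟨hlo, hhi⟩ := hu
  obtain ⟨hlo', hhi'⟩ := hu'
  have htt' : ((t + 2 : ℕ) : ℝ) * s ≤ t' * s := by gcongr
  have ht : 0 ≤ (t : ℝ) * s := by positivity
  unfold awaySign at *
  split_ifs at * with hb
  · have hb' : 0 ≤ (b : ℝ) * s := mul_nonneg (by exact_mod_cast hb) hs.le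
    push_cast [mul_one] at *
    have hu0 : 0 ≤ u := by nlinarith
    have huu : u < u' := by nlinarith
    rw [abs_of_nonneg hu0, abs_of_nonneg (by linarith)]
    exact ⟨mul_nonneg hu0 (by linarith), huu⟩
  · have hb' : (b : ℝ) * s ≤ -s := by
      nlinarith [show (b : ℝ) ≤ -1 by exact_mod_cast (show b ≤ -1 by omega)]
    push_cast [mul_neg, mul_one, ← sub_eq_add_neg] at *
    have hu0 : u ≤ 0 := by nlinarith
    have huu : u' < u := by nlinarith
    rw [abs_of_nonpos hu0, abs_of_nonpos (by linarith)]
    exact ⟨mul_nonneg_of_nonpos_of_nonpos hu0 (by linarith), by linarith⟩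

theorem abs_sub_max_mul_le (hs : 0 < s) {u : ℝ} {b : ℤ} {t t₀ : ℕ}
    (hu : ⌊u / s⌋ = b + t * awaySign b) (h₀ : t₀ ≤ t) (h₁ : t ≤ t₀ + 1) :
    |u - (max (b + t₀ * awaySign b) (b + (t₀ + 1 : ℕ) * awaySign b) : ℤ) * s| ≤ s := by
  rw [floor_div_eq_iff hs] at hu
  have h₀' : (t₀ : ℝ) ≤ t := by exact_mod_cast h₀
  have h₁' : (t : ℝ) ≤ t₀ + 1 := by exact_mod_cast h₁
  unfold awaySign at *
  split_ifs at * with hb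
  · rw [max_eq_right (by omega)]
    push_cast at hu ⊢
    rw [abs_le]
    constructor <;> nlinarith
  · rw [max_eq_left (by omega)]
    push_cast at hu ⊢
    rw [abs_le]
    constructor <;> nlinarith

theorem floor_div_eq_or_eq_add_one {ε u c : ℝ} (hε : 0 < ε) (h : |u - c| ≤ ε) :
    ⌊u / (2 * ε)⌋ = ⌊(c - ε) / (2 * ε)⌋ ∨
      ⌊u / (2 * ε)⌋ = ⌊(c - ε) / (2 * ε)⌋ + 1 := by
  obtain ⟨hlo, hhi⟩ := abs_le.1 h
  have h₁ : ⌊(c - ε) / (2 * ε)⌋ ≤ ⌊u / (2 * ε)⌋ :=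
    Int.floor_le_floor (div_le_div_of_nonneg_right (by linarith) (by positivity))
  have h₂ : ⌊u / (2 * ε)⌋ ≤ ⌊(c - ε) / (2 * ε)⌋ + 1 := by
    rw [← Int.floor_add_one]
    refine Int.floor_le_floor ?_
    rw [div_add_one (by positivity)]
    exact div_le_div_of_nonneg_right (by linarith) (by positivity)
  omega

variable {d : ℕ}

noncomputable def cellIndex (s : ℝ) (x : Fin d → ℝ) : Fin d → ℤ := fun i => ⌊x i / s⌋

def stepAway (b : Fin d → ℤ) (t : ℕ) : Fin d → ℤ := fun i => b i + t * awaySign (b i)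

/-- The common vertex of the cells `stepAway b t` and `stepAway b (t + 1)`. -/
def stepAwayCorner (s : ℝ) (b : Fin d → ℤ) (t : ℕ) : Fin d → ℝ :=
  fun i => (max (stepAway b t i) (stepAway b (t + 1) i) : ℤ) * s

/-- On the axis `p.1` the two cells next to the hyperplane `x_{p.1} = 0`; on every other axis
the two cells (at scale `2 ε`) met by the `p.2.1`-th ball of radius `ε` of `c p.1`; the choice
between the two is `p.2.2`. -/
noncomputable def candidateCell {N : ℕ} (ε : ℝ) (c : Fin d → Fin N → Fin d → ℝ)
    (p : Fin d × Fin N × (Fin d → Fin 2)) : Fin d → ℤ :=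
  fun i => (if i = p.1 then -1 else ⌊(c p.1 p.2.1 i - ε) / (2 * ε)⌋) + (p.2.2 i : ℕ)

theorem exists_fin_two_eq_add {ι : Type*} {a b : ι → ℤ}
    (h : ∀ i, b i = a i ∨ b i = a i + 1) :
    ∃ δ : ι → Fin 2, b = fun i => a i + (δ i : ℕ) :=
  ⟨fun i => if b i = a i then 0 else 1, funext fun i => by
    rcases h i with hi | hi <;> simp [hi]⟩

theorem exists_cellIndex_eq_stepAway_shrink [Nonempty (Fin d)] (hs : 0 < s)
    (x : Fin d → ℝ) :
    ∃ (j : Fin d) (t : ℕ) (y : Fin d → ℝ), cellIndex s x = stepAway (cellIndex s y) t ∧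
      (cellIndex s y j = 0 ∨ cellIndex s y j = -1) ∧
      ∀ i, 0 ≤ y i * x i ∧ |y i| ≤ |x i| := by
  obtain ⟨j, -, hj⟩ := Finset.univ.exists_min_image (fun i => cellDepth (cellIndex s x i))
    Finset.univ_nonempty
  set t := cellDepth (cellIndex s x j)
  have ht : ∀ i, t ≤ cellDepth (cellIndex s x i) := fun i => hj i (Finset.mem_univ i)
  set y : Fin d → ℝ := fun i => x i - t * awaySign (cellIndex s x i) * s
  have hy : ∀ i, cellIndex s y i = cellIndex s x i - t * awaySign (cellIndex s x i) := fun i => by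
    have h := floor_div_sub_intCast_mul hs (x i) (t * awaySign (cellIndex s x i))
    push_cast at h
    exact h
  refine ⟨j, t, y, funext fun i => ?_, ?_, fun i =>
    mul_nonneg_and_abs_le_of_le_cellDepth hs rfl (ht i)⟩
  · rw [stepAway, hy, awaySign_sub_of_le_cellDepth (ht i)]
    ring
  · rw [hy]
    exact sub_cellDepth_mul_awaySign _

theorem exists_cellIndex_eq_stepAway_candidateCell [Nonempty (Fin d)]
    {f : (Fin d → ℝ) → ℝ} (hm : IsMonotoneQuasiNorm f) {ε : ℝ} (hε : 0 < ε) {N : ℕ}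
    {c : Fin d → Fin N → Fin d → ℝ}
    (hc : ∀ i, {x | f x ≤ 1} ∩ {x | x i = 0} ⊆ ⋃ r, closedBall (c i r) ε)
    {x : Fin d → ℝ} (hx : f x ≤ 1) :
    ∃ p t, cellIndex (2 * ε) x = stepAway (candidateCell ε c p) t := by
  obtain ⟨j, t, y, hxy, hyj, hyx⟩ :=
    exists_cellIndex_eq_stepAway_shrink (s := 2 * ε) (by positivity) x
  have hz : f (Function.update y j 0) ≤ 1 := by
    refine (hm _ _ (fun i => ?_) (fun i => ?_)).trans hx <;>
      by_cases hi : i = j <;> simp [hi, hyx i]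
  obtain ⟨r, hr⟩ := mem_iUnion.1 (hc j ⟨hz, Function.update_self j 0 y⟩)
  have hcell : ∀ i, cellIndex (2 * ε) y i =
      (if i = j then -1 else ⌊(c j r i - ε) / (2 * ε)⌋) ∨
      cellIndex (2 * ε) y i = (if i = j then -1 else ⌊(c j r i - ε) / (2 * ε)⌋) + 1 := by
    intro i
    split_ifs with hi
    · subst hi
      omega
    · refine floor_div_eq_or_eq_add_one hε ?_
      rw [← Real.dist_eq]
      simpa [Function.update_of_ne hi] using (dist_le_pi_dist _ _ i).trans (mem_closedBall.1 hr)
  obtain ⟨δ, hδ⟩ := exists_fin_two_eq_add hcell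
  exact ⟨(j, r, δ), t, hxy.trans (congrArg (stepAway · t) hδ)⟩

theorem le_succ_of_cellIndex_eq_stepAway {f : (Fin d → ℝ) → ℝ}
    (hstrict : IsStrictlyMonotoneQuasiNorm f) (hs : 0 < s) {x x' : Fin d → ℝ}
    (hxx' : f x' ≤ f x) {b : Fin d → ℤ} {t t' : ℕ}
    (hx : cellIndex s x = stepAway b t) (hx' : cellIndex s x' = stepAway b t') :
    t' ≤ t + 1 := by
  by_contra! htt
  have hlt := fun i => mul_nonneg_and_abs_lt_of_floor_div_eq hs (congrFun hx i) (congrFun hx' i) htt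
  exact (hstrict x x' (fun i => (hlt i).1) (fun i => (hlt i).2)).not_ge hxx'

theorem dist_stepAwayCorner_le (hs : 0 < s) {x : Fin d → ℝ} {b : Fin d → ℤ}
    {t t₀ : ℕ} (hx : cellIndex s x = stepAway b t) (h₀ : t₀ ≤ t) (h₁ : t ≤ t₀ + 1) :
    dist x (stepAwayCorner s b t₀) ≤ s :=
  (dist_pi_le_iff hs.le).2 fun i => by
    rw [Real.dist_eq]
    exact abs_sub_max_mul_le hs (congrFun hx i) h₀ h₁

theorem exists_sphere_subset_iUnion_closedBall [Nonempty (Fin d)] {f : (Fin d → ℝ) → ℝ}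
    (hm : IsMonotoneQuasiNorm f) (hstrict : IsStrictlyMonotoneQuasiNorm f)
    {ε : ℝ} (hε : 0 < ε) {N : ℕ} {c : Fin d → Fin N → Fin d → ℝ}
    (hc : ∀ i, {x | f x ≤ 1} ∩ {x | x i = 0} ⊆ ⋃ r, closedBall (c i r) ε) :
    ∃ C : Fin d × Fin N × (Fin d → Fin 2) → Fin d → ℝ,
      {x | f x = 1} ⊆ ⋃ p, closedBall (C p) (2 * ε) := by
  let T : (Fin d → ℤ) → Set ℕ := fun b =>
    {t | ∃ x, f x = 1 ∧ cellIndex (2 * ε) x = stepAway b t}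
  refine ⟨fun p => stepAwayCorner (2 * ε) (candidateCell ε c p)
    (sInf (T (candidateCell ε c p))), fun x hx => ?_⟩
  obtain ⟨p, t, hxt⟩ := exists_cellIndex_eq_stepAway_candidateCell hm hε hc (le_of_eq hx)
  have ht : t ∈ T (candidateCell ε c p) := ⟨x, hx, hxt⟩
  obtain ⟨x₀, hx₀, hx₀t⟩ := Nat.sInf_mem ⟨t, ht⟩
  exact mem_iUnion.2 ⟨p, dist_stepAwayCorner_le (by positivity) hxt (Nat.sInf_le ht)
    (le_succ_of_cellIndex_eq_stepAway hstrict (by positivity) (hx.trans hx₀.symm).le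
      hx₀t hxt)⟩

end Grid

theorem card_le_two_pow_sub_one {d k : ℕ} (hk : d + Nat.clog 2 d < k) :
    Fintype.card (Fin d × Fin (2 ^ (k - d - Nat.clog 2 d - 1)) × (Fin d → Fin 2)) ≤
      2 ^ (k - 1) := by
  simp only [Fintype.card_prod, Fintype.card_fin, Fintype.card_fun]
  calc d * (2 ^ (k - d - Nat.clog 2 d - 1) * 2 ^ d)
      ≤ 2 ^ Nat.clog 2 d * (2 ^ (k - d - Nat.clog 2 d - 1) * 2 ^ d) :=
        Nat.mul_le_mul_right _ (Nat.le_pow_clog one_lt_two d)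
    _ = 2 ^ (k - 1) := by
        rw [← pow_add, ← pow_add]
        congr 1
        omega

theorem IsQuasiNorm.entropyNumber_le_of_subset_iUnion_closedBall {d : ℕ} [Nonempty (Fin d)]
    {f : (Fin d → ℝ) → ℝ} (hf : IsQuasiNorm f) {K : Set (Fin d → ℝ)} {k : ℕ}
    {ι : Type*} [Fintype ι] (hι : Fintype.card ι ≤ 2 ^ (k - 1)) (c : ι → Fin d → ℝ)
    {r : ℝ} (hr : 0 < r) (hK : K ⊆ ⋃ p, closedBall (c p) r) :
    entropyNumber K {x | f x ≤ 1} k ≤ sSup (f '' supBall d) * r := by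
  obtain ⟨e⟩ := Function.Embedding.nonempty_of_card_le (hι.trans (Fintype.card_fin _).ge)
  refine entropyNumber_le_of_subset_iUnion (mul_pos hf.sSup_image_supBall_pos hr)
    (Function.extend e c 0) (hK.trans (iUnion_subset fun p => ?_))
  rw [← e.injective.extend_apply c 0 p]
  exact (hf.closedBall_subset_vadd_smul _ hr).trans (subset_iUnion_of_subset (e p) subset_rfl)

theorem entropy_sphere_upper_general_general (d : ℕ) (hd : 2 ≤ d)
    (nX nY : (Fin d → ℝ) → ℝ)
    (hX : IsQuasiNorm nX)
    (hXmono : IsMonotoneQuasiNorm nX)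
    (hXstrict : ∀ x y : Fin d → ℝ, (∀ j, 0 ≤ x j * y j) →
      (∀ j, |x j| < |y j|) → nX x < nX y)
    (hY : IsQuasiNorm nY)
    (M : ℝ) (hM : M = sSup (nY '' {u | supNorm u ≤ 1}))
    (k : ℕ) (hk : d + Nat.clog 2 d < k) :
    entropyNumber {x | nX x = 1} {x | nY x ≤ 1} k ≤
      2 * M * ⨆ i : Fin d,
        entropyNumber ({x | nX x ≤ 1} ∩ {x | x i = 0})
          (supBall d ∩ {x | x i = 0}) (k - d - Nat.clog 2 d) := by
  have : Nonempty (Fin d) := ⟨⟨0, by omega⟩⟩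
  have hM0 : 0 < M := hM ▸ hY.sSup_image_supBall_pos
  obtain ⟨R, hR, hXR⟩ := hXmono.exists_subset_closedBall hX
  rw [← div_le_iff₀' (by positivity)]
  refine le_of_forall_gt_imp_ge_of_dense fun ε hε => (div_le_iff₀' (by positivity)).2 ?_
  have hsection : ∀ i : Fin d, entropyNumber ({x | nX x ≤ 1} ∩ {x | x i = 0})
      (supBall d ∩ {x | x i = 0}) (k - d - Nat.clog 2 d) < ε := fun i =>
    (le_ciSup (finite_range _).bddAbove i).trans_lt hε
  have hε0 : 0 < ε := entropyNumber_nonneg.trans_lt (hsection (Classical.arbitrary _))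
  have hcover : ∀ i, ∃ c : Fin (2 ^ (k - d - Nat.clog 2 d - 1)) → Fin d → ℝ,
      {x | nX x ≤ 1} ∩ {x | x i = 0} ⊆ ⋃ r, closedBall (c r) ε := fun i => by
    obtain ⟨c, hc⟩ := exists_subset_iUnion_of_entropyNumber_lt
      (balanced_supBall_inter_hyperplane i) hR (inter_hyperplane_subset_smul_supBall hR hXR i)
      (hsection i)
    exact ⟨c, hc.trans (iUnion_mono fun r => vadd_smul_supBall_inter_subset _ hε0.le _)⟩
  choose c hc using hcover
  obtain ⟨C, hC⟩ := exists_sphere_subset_iUnion_closedBall hXmono hXstrict hε0 hc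
  calc _ ≤ M * (2 * ε) := hM ▸ hY.entropyNumber_le_of_subset_iUnion_closedBall
        (card_le_two_pow_sub_one hk) C (by positivity) hC
    _ = 2 * M * ε := by ring

/-- Let `‖·‖_X` be a continuous, monotone and strictly monotone quasi-norm
on `ℝ^d` (`d ≥ 2`), let `‖·‖_Y` be a quasi-norm with `M = sup{‖u‖_Y : ‖u‖_∞ ≤ 1}`. Then for
`k > d + ⌈log₂ d⌉`,
`e_k(S_X, B_Y) ≤ 2M · max_i e_{k-d-⌈log₂ d⌉}(B_X ∩ H_i, B_∞^d ∩ H_i)`. -/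
theorem entropy_sphere_upper_general (d : ℕ) (hd : 2 ≤ d)
    (nX nY : (Fin d → ℝ) → ℝ)
    (hX : IsQuasiNorm nX) (hXc : Continuous nX)
    (hXmono : IsMonotoneQuasiNorm nX)
    (hXstrict : ∀ x y : Fin d → ℝ, (∀ j, 0 ≤ x j * y j) →
      (∀ j, |x j| < |y j|) → nX x < nX y)
    (hY : IsQuasiNorm nY)
    (M : ℝ) (hM : M = sSup (nY '' {u | supNorm u ≤ 1}))
    (k : ℕ) (hk : d + Nat.clog 2 d < k) :
    entropyNumber {x | nX x = 1} {x | nY x ≤ 1} k ≤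
      2 * M * ⨆ i : Fin d,
        entropyNumber ({x | nX x ≤ 1} ∩ {x | x i = 0})
          (supBall d ∩ {x | x i = 0}) (k - d - Nat.clog 2 d) :=
  entropy_sphere_upper_general_general d hd nX nY hX hXmono hXstrict hY M hM k hk
end

section
/- Let d ≥ 2 and let ‖·‖_X and ‖·‖_Y be symmetric norms on ℝ^d (invariant under permutations of coordinates and sign changes) with ‖e_i‖_X = ‖e_i‖_Y = 1 for the standard basis vectors. Set λ_X(ℓ) := ‖∑_{i=1}^ℓ e_i‖_X and λ_Y(ℓ) := ‖∑_{i=1}^ℓ e_i‖_Y. Then for all natural numbers k ≥ 2d + ⌈log₂ d⌉ − 1, the entropy numbers satisfy e_k(S_X, B_Y) ≥ (1/e) · 2^{−k/(d−1)} · λ_Y(d−1)/λ_X(d−1), where S_X = {x : ‖x‖_X = 1} and B_Y = {x : ‖x‖_Y ≤ 1}. -/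
open scoped Pointwise BigOperators

/-- A symmetric norm on `ℝ^d`: a norm invariant under permutations of coordinates and under
sign changes. -/
def IsSymmNorm {d : ℕ} (f : (Fin d → ℝ) → ℝ) : Prop :=
  (∀ x, 0 ≤ f x) ∧ (∀ x, f x = 0 ↔ x = 0) ∧
  (∀ (l : ℝ) (x), f (l • x) = |l| * f x) ∧
  (∀ x y, f (x + y) ≤ f x + f y) ∧
  (∀ (π : Equiv.Perm (Fin d)) (ε : Fin d → ℝ), (∀ i, ε i = 1 ∨ ε i = -1) →
    ∀ x : Fin d → ℝ, f (fun i => ε i * x (π i)) = f x)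

/-- `λ_E(ℓ) = ‖∑_{i=1}^ℓ e_i‖_E`, the norm of the sum of the first `ℓ` standard basis
vectors. -/
noncomputable def lam {d : ℕ} (f : (Fin d → ℝ) → ℝ) (l : ℕ) : ℝ :=
  f (fun i => if (i : ℕ) < l then 1 else 0)

/-!
Write `d = m + 1`. A covering of the `X`-sphere by `N = 2^(k-1)` translates of `ε B_Y` induces a
covering of the cube `[-1/λ_X(m), 1/λ_X(m)]^m` by `N` `ℓ¹`-balls of radius `ε m / λ_Y(m)`: a point
of the cube, placed in the first `m` coordinates, has `X`-norm at most one, so changing the last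
coordinate moves it onto the sphere; dropping that coordinate again does not increase the
`Y`-norm, and `λ_Y(m) ‖v‖₁ ≤ m ‖v‖_Y` for `v` supported on `m` coordinates. Comparing volumes,
`(2/λ_X(m))^m ≤ N (2 ε m/λ_Y(m))^m / m!`, and `m^m ≤ e^m m!` turns this into the bound.
-/

open Function MeasureTheory Metric Nat

namespace IsSymmNorm

variable {d : ℕ} {f : (Fin d → ℝ) → ℝ}

theorem nonneg (hf : IsSymmNorm f) (x : Fin d → ℝ) : 0 ≤ f x := hf.1 x

theorem map_zero (hf : IsSymmNorm f) : f 0 = 0 := (hf.2.1 0).mpr rfl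

theorem map_smul (hf : IsSymmNorm f) (l : ℝ) (x : Fin d → ℝ) : f (l • x) = |l| * f x :=
  hf.2.2.1 l x

theorem map_add_le (hf : IsSymmNorm f) (x y : Fin d → ℝ) : f (x + y) ≤ f x + f y :=
  hf.2.2.2.1 x y

theorem map_neg (hf : IsSymmNorm f) (x : Fin d → ℝ) : f (-x) = f x := by
  simpa using hf.map_smul (-1) x

theorem map_sum_le {ι : Type*} (hf : IsSymmNorm f) (s : Finset ι) (g : ι → Fin d → ℝ) :
    f (∑ j ∈ s, g j) ≤ ∑ j ∈ s, f (g j) :=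
  Finset.le_sum_of_subadditive f hf.map_zero.le hf.map_add_le s g

theorem map_abs_comp_perm (hf : IsSymmNorm f) (π : Equiv.Perm (Fin d)) (x : Fin d → ℝ) :
    f (fun i => |x (π i)|) = f x := by
  refine Eq.trans ?_ (hf.2.2.2.2 π (fun i => if x (π i) < 0 then -1 else 1)
    (fun i => by split_ifs <;> simp) x)
  congr 1
  ext i
  split_ifs with h
  · simp [abs_of_neg h]
  · simp [abs_of_nonneg (not_lt.mp h)]

theorem map_update_neg (hf : IsSymmNorm f) (x : Fin d → ℝ) (i : Fin d) :
    f (update x i (-x i)) = f x := by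
  refine Eq.trans ?_ (hf.2.2.2.2 1 (update 1 i (-1)) (fun j => ?_) x)
  · congr 1
    ext j
    rcases eq_or_ne j i with rfl | hj <;> simp [*]
  · rcases eq_or_ne j i with rfl | hj <;> simp [*]

/-- `update x i t` is a convex combination of `x` and of `x` with its `i`-th sign flipped. -/
theorem map_update_le (hf : IsSymmNorm f) (x : Fin d → ℝ) (i : Fin d) {t : ℝ}
    (ht : |t| ≤ |x i|) : f (update x i t) ≤ f x := by
  have ht' : t ∈ segment ℝ (x i) (-x i) := by
    rw [segment_eq_uIcc, Set.mem_uIcc]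
    obtain ⟨h₁, h₂⟩ := abs_le.mp ht
    rcases le_total 0 (x i) with h | h
    · rw [abs_of_nonneg h] at h₁ h₂
      exact Or.inr ⟨h₁, h₂⟩
    · simp only [abs_of_nonpos h, neg_neg] at h₁ h₂
      exact Or.inl ⟨h₁, h₂⟩
  obtain ⟨a, b, ha, hb, hab, rfl⟩ := ht'
  have hsplit : update x i (a • x i + b • -x i) = a • x + b • update x i (-x i) := by
    ext j
    rcases eq_or_ne j i with rfl | hj
    · simp
    · simp [hj, ← add_mul, hab]
  calc f (update x i (a • x i + b • -x i)) ≤ |a| * f x + |b| * f (update x i (-x i)) := by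
        rw [hsplit, ← hf.map_smul, ← hf.map_smul]; exact hf.map_add_le _ _
    _ = f x := by rw [hf.map_update_neg, abs_of_nonneg ha, abs_of_nonneg hb, ← add_mul, hab,
        one_mul]

theorem mono (hf : IsSymmNorm f) {x z : Fin d → ℝ} (h : ∀ i, |x i| ≤ |z i|) : f x ≤ f z := by
  classical
  suffices ∀ s : Finset (Fin d), f (s.piecewise x z) ≤ f z by
    simpa using this Finset.univ
  intro s
  induction s using Finset.induction_on with
  | empty => simp
  | insert i s hi ih =>
    rw [Finset.piecewise_insert]
    refine (hf.map_update_le _ i ?_).trans ih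
    simpa [hi] using h i

theorem map_single (hf : IsSymmNorm f) (hfe : ∀ i : Fin d, f (Pi.single i 1) = 1) (i : Fin d)
    (t : ℝ) : f (Pi.single i t) = |t| := by
  simpa [← Pi.single_smul', hfe] using hf.map_smul t (Pi.single i 1)

theorem abs_apply_le (hf : IsSymmNorm f) (hfe : ∀ i : Fin d, f (Pi.single i 1) = 1)
    (x : Fin d → ℝ) (i : Fin d) : |x i| ≤ f x := by
  rw [← hf.map_single hfe i]
  refine hf.mono fun j => ?_
  rcases eq_or_ne j i with rfl | hj
  · simp
  · simp [hj]

theorem le_sum_abs (hf : IsSymmNorm f) (hfe : ∀ i : Fin d, f (Pi.single i 1) = 1)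
    (x : Fin d → ℝ) : f x ≤ ∑ i, |x i| := by
  calc f x = f (∑ i, Pi.single i (x i)) := by rw [Finset.univ_sum_single]
    _ ≤ ∑ i, f (Pi.single i (x i)) := hf.map_sum_le _ _
    _ = ∑ i, |x i| := by simp only [hf.map_single hfe]

theorem setOf_le_one_subset_smul {nX nY : (Fin d → ℝ) → ℝ}
    (hX : IsSymmNorm nX) (hXe : ∀ i : Fin d, nX (Pi.single i 1) = 1) (hY : IsSymmNorm nY)
    (hYe : ∀ i : Fin d, nY (Pi.single i 1) = 1) (hd : d ≠ 0) :
    {x | nX x ≤ 1} ⊆ (d : ℝ) • {x | nY x ≤ 1} := by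
  intro x hx
  have hd' : (0 : ℝ) < d := by positivity
  rw [Set.mem_smul_set_iff_inv_smul_mem₀ hd'.ne']
  change nY _ ≤ 1
  rw [hY.map_smul, abs_of_pos (inv_pos.2 hd'), inv_mul_le_one₀ hd']
  calc nY x ≤ ∑ i, |x i| := hY.le_sum_abs hYe x
    _ ≤ ∑ _i : Fin d, (1 : ℝ) := Finset.sum_le_sum fun i _ => (hX.abs_apply_le hXe x i).trans hx
    _ = d := by simp

theorem one_le_lam (hf : IsSymmNorm f) (hfe : ∀ i : Fin d, f (Pi.single i 1) = 1) {l : ℕ}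
    (hl : l ≠ 0) (hld : l ≤ d) : 1 ≤ lam f l := by
  simpa [lam, Nat.pos_of_ne_zero hl] using
    hf.abs_apply_le hfe (fun i => if (i : ℕ) < l then 1 else 0) ⟨0, by omega⟩

/-- Averaging `|y|` over the cyclic shifts of the first `l` coordinates gives the constant
vector `(∑ i, |y i|) / l` there, and each shift has norm `f y`. -/
theorem lam_mul_sum_abs_le (hf : IsSymmNorm f) {l : ℕ} [NeZero l] (hld : l ≤ d)
    (y : Fin d → ℝ) (hy : ∀ i : Fin d, l ≤ (i : ℕ) → y i = 0) :
    lam f l * ∑ i, |y i| ≤ l * f y := by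
  set e := Fin.castLEEmb hld
  let π : Fin l → Equiv.Perm (Fin d) := fun j => (Equiv.addRight j).viaFintypeEmbedding e
  have hsum_e : ∑ s, |y (e s)| = ∑ i, |y i| :=
    Fintype.sum_of_injective e e.injective _ _
      (fun i hi => by rw [hy i (not_lt.1 fun h => hi ⟨⟨i, h⟩, rfl⟩), abs_zero])
      (fun _ => rfl)
  have hshifts : ∑ j, (fun i => |y (π j i)|) =
      (∑ i, |y i|) • fun i : Fin d => if (i : ℕ) < l then (1 : ℝ) else 0 := by
    ext i
    rw [Finset.sum_apply, Pi.smul_apply, smul_eq_mul]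
    by_cases hi : (i : ℕ) < l
    · obtain ⟨t, rfl⟩ : ∃ t, e t = i := ⟨⟨i, hi⟩, rfl⟩
      simp only [π, Equiv.Perm.viaFintypeEmbedding_apply_image, Equiv.coe_addRight, if_pos hi,
        mul_one]
      rw [← hsum_e]
      exact Equiv.sum_comp (Equiv.addLeft _) (fun s => |y (e s)|)
    · have hr : i ∉ Set.range e := by rintro ⟨s, rfl⟩; exact hi s.2
      simp [π, Equiv.Perm.viaFintypeEmbedding_apply_notMem_range _ _ hr, hy i (not_lt.mp hi), hi]
  calc lam f l * ∑ i, |y i| = f (∑ j, fun i => |y (π j i)|) := by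
        rw [hshifts, hf.map_smul, abs_of_nonneg (Finset.sum_nonneg fun _ _ => abs_nonneg _),
          mul_comm, lam]
    _ ≤ ∑ j, f (fun i => |y (π j i)|) := hf.map_sum_le _ _
    _ = l * f y := by simp [hf.map_abs_comp_perm]

theorem exists_update_eq_one (hf : IsSymmNorm f) (hfe : ∀ i : Fin d, f (Pi.single i 1) = 1)
    (x : Fin d → ℝ) (i : Fin d) (hx : f x ≤ 1) : ∃ s, f (update x i s) = 1 := by
  have hstep : ∀ s t, update x i s = update x i t + Pi.single i (s - t) := by
    intro s t
    ext j
    rcases eq_or_ne j i with rfl | hj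
    · simp
    · simp [hj]
  have hlip : LipschitzWith 1 fun s => f (update x i s) := by
    refine LipschitzWith.of_le_add fun s t => ?_
    rw [Real.dist_eq, ← hf.map_single hfe i, hstep s t]
    exact hf.map_add_le _ _
  have hlarge : 1 ≤ f (update x i (x i + (f x + 1))) := by
    have hsplit : update x i (x i + (f x + 1)) = Pi.single i (f x + 1) + x := by
      rw [hstep _ (x i), update_eq_self, add_sub_cancel_left, add_comm]
    have h := hf.map_add_le (Pi.single i (f x + 1) + x) (-x)
    rw [add_neg_cancel_right, hf.map_single hfe, hf.map_neg,
      abs_of_pos (by linarith [hf.nonneg x])] at h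
    rw [hsplit]
    linarith
  obtain ⟨s, hs⟩ := intermediate_value_univ (x i) (x i + (f x + 1)) hlip.continuous
    ⟨by simpa using hx, hlarge⟩
  exact ⟨s, hs⟩

end IsSymmNorm

theorem volume_setOf_sum_abs_le (m : ℕ) [NeZero m] (r : ℝ) :
    volume {w : Fin m → ℝ | ∑ t, |w t| ≤ r} =
      ENNReal.ofReal r ^ m * ENNReal.ofReal (2 ^ m / m !) := by
  simpa [Real.Gamma_nat_eq_factorial, one_add_one_eq_two] using
    volume_sum_rpow_le (Fin m) le_rfl r

theorem pow_mul_factorial_le_of_closedBall_subset_iUnion {m N : ℕ} [NeZero m] {ρ r : ℝ}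
    (hρ : 0 ≤ ρ) (hr : 0 ≤ r) (c : Fin N → Fin m → ℝ)
    (h : closedBall 0 ρ ⊆ ⋃ j, c j +ᵥ {w : Fin m → ℝ | ∑ t, |w t| ≤ r}) :
    ρ ^ m * m ! ≤ N * r ^ m := by
  have hvol : ENNReal.ofReal ((2 * ρ) ^ m) ≤ ENNReal.ofReal (N * (r ^ m * (2 ^ m / m !))) :=
    calc ENNReal.ofReal ((2 * ρ) ^ m) = volume (closedBall (0 : Fin m → ℝ) ρ) := by
          rw [Real.volume_pi_closedBall _ hρ, Fintype.card_fin]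
      _ ≤ ∑ j, volume (c j +ᵥ {w : Fin m → ℝ | ∑ t, |w t| ≤ r}) :=
          (measure_mono h).trans (measure_iUnion_fintype_le _ _)
      _ = ENNReal.ofReal (N * (r ^ m * (2 ^ m / m !))) := by
          simp only [measure_vadd, volume_setOf_sum_abs_le, Finset.sum_const, Finset.card_univ,
            Fintype.card_fin, nsmul_eq_mul]
          rw [ENNReal.ofReal_mul (by positivity), ENNReal.ofReal_mul (by positivity),
            ENNReal.ofReal_pow hr, ENNReal.ofReal_natCast]
  rw [ENNReal.ofReal_le_ofReal_iff (by positivity), mul_pow] at hvol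
  have h2 : (0 : ℝ) < 2 ^ m := by positivity
  calc ρ ^ m * m ! = 2 ^ m * ρ ^ m * m ! / 2 ^ m := by field_simp
    _ ≤ N * (r ^ m * (2 ^ m / m !)) * m ! / 2 ^ m := by gcongr
    _ = N * r ^ m := by field_simp

theorem pow_le_exp_mul_factorial (m : ℕ) : (m : ℝ) ^ m ≤ Real.exp 1 ^ m * m ! := by
  rw [Real.exp_one_pow, ← div_le_iff₀ (by positivity)]
  exact Real.pow_div_factorial_le_exp (x := m) (Nat.cast_nonneg m) m

theorem mul_div_pow_le_card_of_closedBall_subset_iUnion {m N : ℕ} [NeZero m] {ρ r : ℝ}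
    (hρ : 0 ≤ ρ) (hr : 0 < r) (c : Fin N → Fin m → ℝ)
    (h : closedBall 0 ρ ⊆ ⋃ j, c j +ᵥ {w : Fin m → ℝ | ∑ t, |w t| ≤ r}) :
    (ρ * m / (Real.exp 1 * r)) ^ m ≤ N := by
  have hvol := pow_mul_factorial_le_of_closedBall_subset_iUnion hρ hr.le c h
  calc (ρ * m / (Real.exp 1 * r)) ^ m = ρ ^ m * m ^ m / (Real.exp 1 ^ m * r ^ m) := by
        rw [div_pow, mul_pow, mul_pow]
    _ ≤ ρ ^ m * (Real.exp 1 ^ m * m !) / (Real.exp 1 ^ m * r ^ m) := by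
        gcongr; exact pow_le_exp_mul_factorial m
    _ = ρ ^ m * m ! / r ^ m := by field_simp
    _ ≤ N := div_le_of_le_mul₀ (by positivity) (by positivity) hvol

theorem mul_two_rpow_neg_div_le {C ε : ℝ} {m k : ℕ} (hm : m ≠ 0) (hC : 0 ≤ C) (hε : 0 < ε)
    (h : (C / ε) ^ m ≤ 2 ^ k) : C * 2 ^ (-(k : ℝ) / m) ≤ ε := by
  have hroot : C / ε ≤ 2 ^ ((k : ℝ) / m) := by
    have hpow : ((2 : ℝ) ^ ((k : ℝ) / m)) ^ m = 2 ^ k := by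
      rw [← Real.rpow_natCast, ← Real.rpow_mul zero_le_two, div_mul_cancel₀ _ (by positivity),
        Real.rpow_natCast]
    exact (pow_le_pow_iff_left₀ (by positivity) (by positivity) hm).1 (hpow ▸ h)
  rw [neg_div, Real.rpow_neg zero_le_two, ← div_eq_mul_inv, div_le_iff₀ (by positivity)]
  rwa [div_le_iff₀ hε, mul_comm] at hroot

theorem closedBall_subset_iUnion_of_cover {m : ℕ} [NeZero m]
    {nX nY : (Fin (m + 1) → ℝ) → ℝ} (hX : IsSymmNorm nX)
    (hXe : ∀ i : Fin (m + 1), nX (Pi.single i 1) = 1) (hY : IsSymmNorm nY)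
    (hb : 0 < lam nY m) {ε : ℝ} (hε : 0 ≤ ε) {ι : Type*} (c : ι → Fin (m + 1) → ℝ)
    (hc : {x | nX x = 1} ⊆ ⋃ j, c j +ᵥ ε • {x | nY x ≤ 1}) :
    closedBall (0 : Fin m → ℝ) (lam nX m)⁻¹ ⊆
      ⋃ j, Fin.init (c j) +ᵥ {w : Fin m → ℝ | ∑ t, |w t| ≤ ε * m / lam nY m} := by
  intro w hw
  have ha_inv : 0 ≤ (lam nX m)⁻¹ := inv_nonneg.2 (hX.nonneg _)
  have hwX : nX (Fin.snoc w 0) ≤ 1 :=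
    calc nX (Fin.snoc w 0)
        ≤ nX ((lam nX m)⁻¹ • fun i : Fin (m + 1) => if (i : ℕ) < m then (1 : ℝ) else 0) := by
          refine hX.mono fun i => ?_
          induction i using Fin.lastCases with
          | last => simp
          | cast t =>
            have := (norm_le_pi_norm w t).trans (mem_closedBall_zero_iff.1 hw)
            simpa [abs_of_nonneg ha_inv] using this
      _ = (lam nX m)⁻¹ * lam nX m := by
          rw [hX.map_smul, abs_of_nonneg ha_inv, lam]
      _ ≤ 1 := inv_mul_le_one_of_le₀ le_rfl (hX.nonneg _)
  obtain ⟨s, hs⟩ := hX.exists_update_eq_one hXe _ (Fin.last m) hwX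
  rw [Fin.update_snoc_last] at hs
  obtain ⟨j, _, ⟨u, hu, rfl⟩, hcu⟩ := Set.mem_iUnion.1 (hc hs)
  set v : Fin (m + 1) → ℝ := Fin.snoc (w - Fin.init (c j)) 0
  have hvY : nY v ≤ ε :=
    calc nY v ≤ nY (ε • u) := by
          refine hY.mono fun i => ?_
          rw [show ε • u = Fin.snoc w s - c j from eq_sub_of_add_eq' hcu]
          induction i using Fin.lastCases with
          | last => simp [v]
          | cast t => simp [v, Fin.init]
      _ ≤ ε := by
          rw [hY.map_smul, abs_of_nonneg hε]
          exact mul_le_of_le_one_right hε hu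
  have hl1 := hY.lam_mul_sum_abs_le m.le_succ v fun i hi => by
    induction i using Fin.lastCases with
    | last => simp [v]
    | cast t => exact absurd hi (by simp)
  simp only [Fin.sum_univ_castSucc, v, Fin.snoc_castSucc, Fin.snoc_last, abs_zero,
    add_zero] at hl1
  refine Set.mem_iUnion.2 ⟨j, w - Fin.init (c j), ?_, by simp⟩
  show ∑ t, |(w - Fin.init (c j)) t| ≤ _
  rw [le_div_iff₀ hb]
  linarith [mul_le_mul_of_nonneg_left hvY (Nat.cast_nonneg (α := ℝ) m)]

theorem le_entropyNumber {d k : ℕ} {K B : Set (Fin d → ℝ)} {δ ε₀ : ℝ} (hε₀ : 0 < ε₀)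
    (hK : K ⊆ ε₀ • B)
    (h : ∀ ε > 0, ∀ c : Fin (2 ^ (k - 1)) → Fin d → ℝ, K ⊆ ⋃ j, c j +ᵥ ε • B → δ ≤ ε) :
    δ ≤ entropyNumber K B k :=
  le_csInf ⟨ε₀, hε₀, fun _ => 0, fun x hx => Set.mem_iUnion.2 ⟨⟨0, by positivity⟩, by
    simpa using hK hx⟩⟩ fun ε ⟨hε, c, hc⟩ => h ε hε c hc

theorem entropy_symm_lower_large_general (d : ℕ) (hd : 2 ≤ d)
    (nX nY : (Fin d → ℝ) → ℝ) (hX : IsSymmNorm nX) (hY : IsSymmNorm nY)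
    (hXe : ∀ i : Fin d, nX (Pi.single i 1) = 1)
    (hYe : ∀ i : Fin d, nY (Pi.single i 1) = 1)
    (k : ℕ) :
    (1 / Real.exp 1) * 2 ^ (-(k : ℝ) / ((d : ℝ) - 1)) *
        (lam nY (d - 1) / lam nX (d - 1)) ≤
      entropyNumber {x | nX x = 1} {x | nY x ≤ 1} k := by
  obtain ⟨m, rfl⟩ : ∃ m, d = m + 1 := ⟨d - 1, by omega⟩
  have : NeZero m := ⟨by omega⟩
  have hm : (0 : ℝ) < m := Nat.cast_pos.2 (Nat.pos_of_neZero m)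
  have ha : 0 < lam nX m := zero_lt_one.trans_le (hX.one_le_lam hXe (NeZero.ne m) m.le_succ)
  have hb : 0 < lam nY m := zero_lt_one.trans_le (hY.one_le_lam hYe (NeZero.ne m) m.le_succ)
  rw [Nat.add_sub_cancel, Nat.cast_add_one, add_sub_cancel_right, mul_right_comm]
  refine le_entropyNumber (Nat.cast_pos.2 m.succ_pos)
    (fun x hx => hX.setOf_le_one_subset_smul hXe hY hYe m.succ_ne_zero hx.le)
    fun ε hε c hc => ?_
  have hcube := closedBall_subset_iUnion_of_cover hX hXe hY hb hε.le c hc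
  have hN :=
    mul_div_pow_le_card_of_closedBall_subset_iUnion (by positivity) (by positivity) _ hcube
  refine mul_two_rpow_neg_div_le (NeZero.ne m) (by positivity) hε ?_
  calc (1 / Real.exp 1 * (lam nY m / lam nX m) / ε) ^ m
      = ((lam nX m)⁻¹ * m / (Real.exp 1 * (ε * m / lam nY m))) ^ m := by
        field_simp
    _ ≤ (2 ^ (k - 1) : ℕ) := hN
    _ ≤ 2 ^ k := by
        push_cast
        exact pow_le_pow_right₀ one_le_two (Nat.sub_le k 1)

/-- For symmetric norms `‖·‖_X`, `‖·‖_Y` on `ℝ^d` (`d ≥ 2`) with normalized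
standard basis vectors, and `k ≥ 2d + ⌈log₂ d⌉ − 1`,
`e_k(S_X, B_Y) ≥ (1/e) · 2^{−k/(d−1)} · λ_Y(d−1)/λ_X(d−1)`. -/
theorem entropy_symm_lower_large (d : ℕ) (hd : 2 ≤ d)
    (nX nY : (Fin d → ℝ) → ℝ) (hX : IsSymmNorm nX) (hY : IsSymmNorm nY)
    (hXe : ∀ i : Fin d, nX (Pi.single i 1) = 1)
    (hYe : ∀ i : Fin d, nY (Pi.single i 1) = 1)
    (k : ℕ) (hk : 2 * d + Nat.clog 2 d - 1 ≤ k) :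
    (1 / Real.exp 1) * 2 ^ (-(k : ℝ) / ((d : ℝ) - 1)) *
        (lam nY (d - 1) / lam nX (d - 1)) ≤
      entropyNumber {x | nX x = 1} {x | nY x ≤ 1} k :=
  entropy_symm_lower_large_general d hd nX nY hX hY hXe hYe k
end
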